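/- arXiv:1403.0428 — 2 statements merged into one kernel-verified Lean document; each statement's English description precedes it below -/
import Mathlib

section
/- Let 1 < p < ∞, let s ≥ 0, γ > 0 be real numbers, and let Λ ∈ ℝ. Let t₀ ≥ 0 be the unique solution of (s² + t²)^{(p-2)/2} t = |Λ|/γ, and set w = t₀ · sign(Λ). Then γ (s² + w²)^{(p-2)/2} w = Λ. -/
open Real

lemma Real.abs_mul_sign (x : ℝ) : |x| * Real.sign x = x := by
  rcases lt_trichotomy x 0 with hx | rfl | hx
  · simp [abs_of_neg hx, Real.sign_of_neg hx]
  · simp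
  · simp [abs_of_pos hx, Real.sign_of_pos hx]

lemma rpow_sq_add_sq_mul_sign (s t a x : ℝ) :
    (s ^ 2 + (t * Real.sign x) ^ 2) ^ a * (t * Real.sign x)
      = (s ^ 2 + t ^ 2) ^ a * t * Real.sign x := by
  rcases Real.sign_apply_eq x with h | h | h <;> simp [h]

theorem recover_normal_derivative_general (p s γ Λ t₀ : ℝ) (hγ : 0 < γ)
    (heq : (s ^ 2 + t₀ ^ 2) ^ ((p - 2) / 2) * t₀ = |Λ| / γ) :
    γ * (s ^ 2 + (t₀ * Real.sign Λ) ^ 2) ^ ((p - 2) / 2) * (t₀ * Real.sign Λ) = Λ := by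
  rw [mul_assoc, rpow_sq_add_sq_mul_sign, heq, ← mul_assoc, mul_div_cancel₀ _ hγ.ne', Real.abs_mul_sign]

theorem recover_normal_derivative (p s γ Λ t₀ : ℝ) (hp1 : 1 < p)
    (hs : 0 ≤ s) (hγ : 0 < γ) (ht₀ : 0 ≤ t₀)
    (heq : (s ^ 2 + t₀ ^ 2) ^ ((p - 2) / 2) * t₀ = |Λ| / γ) :
    γ * (s ^ 2 + (t₀ * Real.sign Λ) ^ 2) ^ ((p - 2) / 2) * (t₀ * Real.sign Λ) = Λ :=
  recover_normal_derivative_general p s γ Λ t₀ hγ heq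
end

section
/- Let 1 < p < ∞ and let a : ℝ → ℝ be a nontrivial solution of a'' + V(a,a') a = 0 where V(a,a') = ((2p−3)(a')² + (p−1)a²)/((p−1)(a')² + a²). Then the function h : ℝ^d → ℝ defined by h(x) = e^{−x_d} a(x₁) satisfies the p-Laplace equation div(|∇h|^{p−2} ∇h) = 0 pointwise at every point where ∇h ≠ 0. -/
/-!
With `u = a' e₁ - a e_d`, the gradient of `h` is `e^{-x_d} u(x₁)`, so the flux is
`|∇h|^{p-2} ∇h = e^{-(p-1) x_d} (w a' e₁ - w a e_d)(x₁)` with `w = (a'² + a²)^{(p-2)/2}`.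
Its divergence is `e^{-(p-1) x_d} ((w a')' + (p-1) w a)(x₁)`. Where `a'² + a² ≠ 0`
(equivalently `∇h ≠ 0`), `(w a')' + (p-1) w a` is `(a'² + a²)^{(p-4)/2}` times the ODE
multiplied by its denominator `(p-1) a'² + a²`, hence vanishes.
-/

open Real

theorem hasFDerivAt_euclideanSpace_apply {ι : Type*} (j : ι) (x : EuclideanSpace ℝ ι) :
    HasFDerivAt (𝕜 := ℝ) (fun y : EuclideanSpace ℝ ι => y j) (EuclideanSpace.proj j) x :=
  (EuclideanSpace.proj (𝕜 := ℝ) j).hasFDerivAt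

theorem EuclideanSpace.smul_single {ι : Type*} [DecidableEq ι] (c : ℝ) (k : ι) (s : ℝ) :
    c • EuclideanSpace.single k s = EuclideanSpace.single k (c * s) := by
  ext i
  by_cases hi : i = k <;> simp [hi]

theorem norm_exp_smul_rpow_smul {E : Type*} [NormedAddCommGroup E] [NormedSpace ℝ E]
    (c q : ℝ) (v : E) :
    ‖exp c • v‖ ^ q • (exp c • v) = exp ((q + 1) * c) • (‖v‖ ^ q • v) := by
  rw [norm_smul, norm_of_nonneg (exp_pos c).le, mul_rpow (exp_pos c).le (norm_nonneg v),
    ← exp_mul, smul_smul, smul_smul, mul_right_comm, ← exp_add]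
  ring_nf

section EuclideanSpace

variable {ι : Type*} [Fintype ι]

theorem HasDerivAt.comp_euclideanSpace_apply {F : Type*} [NormedAddCommGroup F]
    [NormedSpace ℝ F] {f : ℝ → F} {f' : F} {x : EuclideanSpace ℝ ι} {j : ι}
    (hf : HasDerivAt f f' (x j)) :
    HasFDerivAt (fun y : EuclideanSpace ℝ ι => f (y j))
      ((ContinuousLinearMap.toSpanSingleton ℝ f').comp (EuclideanSpace.proj j)) x :=
  hf.hasFDerivAt.comp x (hasFDerivAt_euclideanSpace_apply j x)

variable [DecidableEq ι]

noncomputable def divergence (V : EuclideanSpace ℝ ι → EuclideanSpace ℝ ι)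
    (x : EuclideanSpace ℝ ι) : ℝ :=
  ∑ i, fderiv ℝ (fun y => V y i) x (EuclideanSpace.single i 1)

theorem HasFDerivAt.divergence_eq {V : EuclideanSpace ℝ ι → EuclideanSpace ℝ ι}
    {V' : EuclideanSpace ℝ ι →L[ℝ] EuclideanSpace ℝ ι} {x : EuclideanSpace ℝ ι}
    (h : HasFDerivAt V V' x) :
    divergence V x = ∑ i, V' (EuclideanSpace.single i 1) i :=
  Finset.sum_congr rfl fun i _ => by
    have hi : HasFDerivAt (fun y => V y i) ((EuclideanSpace.proj i).comp V') x :=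
      (hasFDerivAt_euclideanSpace_apply i (V x)).comp x h
    rw [hi.fderiv]
    rfl

theorem divergence_smul_comp_apply {ψ : ℝ → ℝ} {ψ' : ℝ} {Φ : ℝ → EuclideanSpace ℝ ι}
    {Φ' : EuclideanSpace ℝ ι} {x : EuclideanSpace ℝ ι} {k l : ι}
    (hψ : HasDerivAt ψ ψ' (x l)) (hΦ : HasDerivAt Φ Φ' (x k)) :
    divergence (fun y => ψ (y l) • Φ (y k)) x = ψ (x l) * Φ' k + ψ' * Φ (x k) l := by
  have hV : HasFDerivAt (fun y : EuclideanSpace ℝ ι => ψ (y l) • Φ (y k)) _ x :=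
    hψ.comp_euclideanSpace_apply.smul hΦ.comp_euclideanSpace_apply
  rw [hV.divergence_eq]
  simp [Finset.sum_add_distrib, apply_ite WithLp.ofLp, ite_apply, mul_comm]

theorem norm_single_sub_single {k l : ι} (hkl : k ≠ l) (s t : ℝ) :
    ‖EuclideanSpace.single k s - EuclideanSpace.single l t‖ = √(s ^ 2 + t ^ 2) := by
  rw [EuclideanSpace.norm_eq, Fintype.sum_eq_add k l hkl]
  · simp [hkl, hkl.symm]
  · rintro i ⟨hik, hil⟩
    simp [hik, hil]

theorem norm_rpow_smul_single_sub_single {k l : ι} (hkl : k ≠ l) (q s t : ℝ) :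
    ‖EuclideanSpace.single k s - EuclideanSpace.single l t‖ ^ q •
        (EuclideanSpace.single k s - EuclideanSpace.single l t) =
      EuclideanSpace.single k ((s ^ 2 + t ^ 2) ^ (q / 2) * s) -
        EuclideanSpace.single l ((s ^ 2 + t ^ 2) ^ (q / 2) * t) := by
  rw [norm_single_sub_single hkl, sqrt_eq_rpow, ← rpow_mul (by positivity), smul_sub,
    EuclideanSpace.smul_single, EuclideanSpace.smul_single, one_div_mul_eq_div]

theorem HasDerivAt.single_sub_single {F G : ℝ → ℝ} {F' G' t : ℝ} (k l : ι)
    (hF : HasDerivAt F F' t) (hG : HasDerivAt G G' t) :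
    HasDerivAt (fun u => EuclideanSpace.single k (F u) - EuclideanSpace.single l (G u))
      (EuclideanSpace.single k F' - EuclideanSpace.single l G') t := by
  have h := (hF.smul_const (EuclideanSpace.single k (1 : ℝ))).sub
    (hG.smul_const (EuclideanSpace.single l (1 : ℝ)))
  simp only [EuclideanSpace.smul_single, mul_one] at h
  exact h

theorem hasGradientAt_exp_neg_mul_comp {a : ℝ → ℝ} {a' : ℝ} {x : EuclideanSpace ℝ ι}
    {k l : ι} (ha : HasDerivAt a a' (x k)) :
    HasGradientAt (fun y : EuclideanSpace ℝ ι => exp (-y l) * a (y k))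
      (exp (-x l) • (EuclideanSpace.single k a' - EuclideanSpace.single l (a (x k)))) x := by
  have he := (hasDerivAt_neg (x l)).exp.comp_hasFDerivAt x (hasFDerivAt_euclideanSpace_apply l x)
  rw [hasGradientAt_iff_hasFDerivAt]
  refine (he.mul (ha.comp_hasFDerivAt x (hasFDerivAt_euclideanSpace_apply k x))).congr_fderiv ?_
  ext v
  simp [EuclideanSpace.inner_single_left]
  ring

end EuclideanSpace

theorem HasDerivAt.rpow_sq_add_sq {f g : ℝ → ℝ} {f' g' t : ℝ} (q : ℝ)
    (hf : HasDerivAt f f' t) (hg : HasDerivAt g g' t) (hs : f t ^ 2 + g t ^ 2 ≠ 0) :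
    HasDerivAt (fun u => (f u ^ 2 + g u ^ 2) ^ q)
      (q * (f t ^ 2 + g t ^ 2) ^ (q - 1) * (2 * f t * f' + 2 * g t * g')) t := by
  refine (((hf.pow 2).add (hg.pow 2)).rpow_const (p := q) (Or.inl hs)).congr_deriv ?_
  norm_num
  ring

theorem hasDerivAt_wolff_flux {p : ℝ} (hp : 1 < p) {a a' : ℝ → ℝ} {a'' t : ℝ}
    (ha : HasDerivAt a (a' t) t) (ha' : HasDerivAt a' a'' t) (hs : a' t ^ 2 + a t ^ 2 ≠ 0)
    (hODE : a'' + ((2 * p - 3) * a' t ^ 2 + (p - 1) * a t ^ 2)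
      / ((p - 1) * a' t ^ 2 + a t ^ 2) * a t = 0) :
    HasDerivAt (fun u => (a' u ^ 2 + a u ^ 2) ^ ((p - 2) / 2) * a' u)
      (-(p - 1) * ((a' t ^ 2 + a t ^ 2) ^ ((p - 2) / 2) * a t)) t := by
  refine ((ha'.rpow_sq_add_sq ((p - 2) / 2) ha hs).mul ha').congr_deriv ?_
  set A := a t
  set B := a' t
  set S := B ^ 2 + A ^ 2
  have hD : (p - 1) * B ^ 2 + A ^ 2 ≠ 0 := by
    have hS : 0 < S := lt_of_le_of_ne (by positivity) hs.symm
    nlinarith [sq_nonneg A, sq_nonneg B, mul_nonneg (sub_pos.2 hp).le (sq_nonneg B)]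
  rw [div_mul_eq_mul_div, add_div' _ _ _ hD, div_eq_zero_iff, or_iff_left hD] at hODE
  have hsplit : S ^ ((p - 2) / 2) = S ^ ((p - 2) / 2 - 1) * S := by
    rw [← rpow_add_one hs, sub_add_cancel]
  rw [hsplit]
  linear_combination S ^ ((p - 2) / 2 - 1) * hODE

theorem ContDiff.hasDerivAt_deriv {f : ℝ → ℝ} (hf : ContDiff ℝ 2 f) (t : ℝ) :
    HasDerivAt (deriv f) (deriv (deriv f) t) t :=
  ((contDiff_succ_iff_deriv.mp hf).2.2.differentiable one_ne_zero t).hasDerivAt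

theorem wolff_solutions_p_harmonic (d : ℕ) (hd : 2 ≤ d) (p : ℝ) (hp1 : 1 < p)
    (a : ℝ → ℝ) (ha : ContDiff ℝ 2 a)
    (hODE : ∀ x : ℝ,
      deriv (deriv a) x
        + (((2 * p - 3) * (deriv a x) ^ 2 + (p - 1) * (a x) ^ 2)
            / ((p - 1) * (deriv a x) ^ 2 + (a x) ^ 2)) * a x = 0) :
    ∀ x : EuclideanSpace ℝ (Fin d),
      gradient (fun y : EuclideanSpace ℝ (Fin d) =>
          Real.exp (-(y ⟨d - 1, by omega⟩)) * a (y ⟨0, by omega⟩)) x ≠ 0 →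
      (∑ i : Fin d, fderiv ℝ (fun y : EuclideanSpace ℝ (Fin d) =>
          ‖gradient (fun z : EuclideanSpace ℝ (Fin d) =>
              Real.exp (-(z ⟨d - 1, by omega⟩)) * a (z ⟨0, by omega⟩)) y‖ ^ (p - 2)
            * gradient (fun z : EuclideanSpace ℝ (Fin d) =>
              Real.exp (-(z ⟨d - 1, by omega⟩)) * a (z ⟨0, by omega⟩)) y i)
          x (EuclideanSpace.single i 1)) = 0 := by
  intro x hx
  set k : Fin d := ⟨0, by omega⟩
  set l : Fin d := ⟨d - 1, by omega⟩
  set h := fun z : EuclideanSpace ℝ (Fin d) => exp (-z l) * a (z k)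
  have hkl : k ≠ l := Fin.ne_of_val_ne (by simp only [k, l]; omega)
  have ha' (t : ℝ) : HasDerivAt a (deriv a t) t := (ha.differentiable two_ne_zero t).hasDerivAt
  have hgrad (y : EuclideanSpace ℝ (Fin d)) : gradient h y =
      exp (-y l) • (EuclideanSpace.single k (deriv a (y k)) - EuclideanSpace.single l (a (y k))) :=
    (hasGradientAt_exp_neg_mul_comp (ha' _)).gradient
  have hs : deriv a (x k) ^ 2 + a (x k) ^ 2 ≠ 0 := by
    contrapose! hx
    rw [hgrad, ← norm_eq_zero, norm_smul, norm_single_sub_single hkl, hx, sqrt_zero, mul_zero]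
  change divergence (fun y => ‖gradient h y‖ ^ (p - 2) • gradient h y) x = 0
  simp only [hgrad, norm_exp_smul_rpow_smul, norm_rpow_smul_single_sub_single hkl]
  have hψ := ((hasDerivAt_neg (x l)).const_mul (p - 2 + 1)).exp
  have hΦ := HasDerivAt.single_sub_single k l
    (hasDerivAt_wolff_flux hp1 (ha' _) (ha.hasDerivAt_deriv _) hs (hODE _))
    (((ha.hasDerivAt_deriv _).rpow_sq_add_sq ((p - 2) / 2) (ha' _) hs).mul (ha' _))
  refine (divergence_smul_comp_apply hψ hΦ).trans ?_
  simp [hkl, hkl.symm]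
  ring
end
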